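/- The function x ↦ 1/((1+x)·ln(1+x)) is completely monotonic on (0,∞); that is, it has derivatives of all orders on (0,∞) and (-1)ⁿ times its n-th derivative is nonnegative on (0,∞) for every integer n ≥ 0. -/

import Mathlib

open Real Finset

/-- Coefficients in the derivative formula. -/
def Acoef : ℕ → ℕ → ℕ
  | 0, k => if k = 1 then 1 else 0
  | n+1, 0 => 0
  | n+1, k+1 => (n+1) * Acoef n (k+1) + k * Acoef n k

lemma Acoef_vanish : ∀ n k, n + 1 < k → Acoef n k = 0 := by
  intro n
  induction n with
  | zero => intro k hk; simp [Acoef]; omega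
  | succ n ih =>
    intro k hk
    match k, hk with
    | k+1, hk =>
      simp only [Acoef]
      rw [ih (k+1) (by omega), ih k (by omega)]
      ring

lemma sum_id (n : ℕ) (v : ℝ) :
    ∑ k ∈ range (n+3), (Acoef (n+1) k : ℝ) * v^k
      = ∑ k ∈ range (n+2), (Acoef n k : ℝ) * ((n+1) * v^k + k * v^(k+1)) := by
  rw [Finset.sum_range_succ' (fun k => (Acoef (n+1) k : ℝ) * v^k) (n+2)]
  have h0 : (Acoef (n+1) 0 : ℝ) * v ^ 0 = 0 := by simp [Acoef]
  rw [h0, add_zero]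
  have hL : ∀ j, (Acoef (n+1) (j+1) : ℝ) * v^(j+1)
      = (n+1) * ((Acoef n (j+1) : ℝ) * v^(j+1)) + (j : ℝ) * ((Acoef n j : ℝ) * v^(j+1)) := by
    intro j
    simp only [Acoef]
    push_cast
    ring
  simp only [hL]
  rw [Finset.sum_add_distrib, ← Finset.mul_sum]
  have hz : Acoef n 0 = 0 := by cases n <;> simp [Acoef]
  have shift : ∑ j ∈ range (n+2), (Acoef n (j+1) : ℝ) * v^(j+1)
      = ∑ k ∈ range (n+2), (Acoef n k : ℝ) * v^k := by
    have e1 := Finset.sum_range_succ' (fun k => (Acoef n k : ℝ) * v^k) (n+2)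
    have e2 := Finset.sum_range_succ (fun k => (Acoef n k : ℝ) * v^k) (n+2)
    simp only [hz, Nat.cast_zero, zero_mul, add_zero, Acoef_vanish n (n+2) (by omega)] at e1 e2
    rw [← e1, e2]
  rw [shift]
  rw [Finset.sum_congr rfl (fun k _ => by ring :
    ∀ k ∈ range (n+2), (Acoef n k : ℝ) * ((n+1) * v^k + k * v^(k+1))
      = (n+1) * ((Acoef n k : ℝ) * v^k) + (k : ℝ) * ((Acoef n k : ℝ) * v^(k+1)))]
  rw [Finset.sum_add_distrib, ← Finset.mul_sum]

noncomputable def Ffun (n : ℕ) (x : ℝ) : ℝ :=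
  (-1)^n * ∑ k ∈ range (n+2),
    (Acoef n k : ℝ) * (((1+x)⁻¹)^(n+1) * ((Real.log (1+x))⁻¹)^k)

lemma hasDerivAt_term (n k : ℕ) {x : ℝ} (hx : 0 < x) :
    HasDerivAt (fun x : ℝ => ((1+x)⁻¹)^(n+1) * ((Real.log (1+x))⁻¹)^k)
      (-((n+1) * ((1+x)⁻¹)^(n+2) * ((Real.log (1+x))⁻¹)^k
         + k * ((1+x)⁻¹)^(n+2) * ((Real.log (1+x))⁻¹)^(k+1))) x := by
  have hy : (0:ℝ) < 1 + x := by linarith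
  have hy' : (1:ℝ) + x ≠ 0 := ne_of_gt hy
  have hL0 : 0 < Real.log (1+x) := Real.log_pos (by linarith)
  have hL : Real.log (1+x) ≠ 0 := ne_of_gt hL0
  have hu : HasDerivAt (fun x : ℝ => (1+x)⁻¹) (-1/(1+x)^2) x :=
    ((hasDerivAt_id x).const_add 1).inv hy'
  have hlog : HasDerivAt (fun x : ℝ => Real.log (1+x)) (1/(1+x)) x :=
    ((hasDerivAt_id x).const_add 1).log hy'
  have hv : HasDerivAt (fun x : ℝ => (Real.log (1+x))⁻¹)
      (-(1/(1+x))/(Real.log (1+x))^2) x := hlog.inv hL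
  have eu : (-1:ℝ)/(1+x)^2 = -((1+x)⁻¹ * (1+x)⁻¹) := by
    rw [neg_div, one_div, sq, mul_inv]
  have ev : -(1/(1+x))/(Real.log (1+x))^2
      = -((1+x)⁻¹ * ((Real.log (1+x))⁻¹ * (Real.log (1+x))⁻¹)) := by
    rw [neg_div, div_div, one_div, mul_inv, sq, mul_inv]
  rw [eu] at hu
  rw [ev] at hv
  have h := (hu.fun_pow (n+1)).fun_mul (hv.fun_pow k)
  refine h.congr_deriv (Eq.symm ?_)
  cases k with
  | zero =>
    simp only [pow_zero, mul_one, Nat.cast_zero, zero_mul, mul_zero, add_zero,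
      Nat.add_sub_cancel]
    push_cast
    ring
  | succ j =>
    simp only [Nat.add_sub_cancel]
    push_cast
    ring

lemma hasDerivAt_F (n : ℕ) {x : ℝ} (hx : 0 < x) :
    HasDerivAt (Ffun n) (Ffun (n+1) x) x := by
  have h : HasDerivAt
      (fun x => ∑ k ∈ range (n+2),
        (Acoef n k : ℝ) * (((1+x)⁻¹)^(n+1) * ((Real.log (1+x))⁻¹)^k))
      (∑ k ∈ range (n+2),
        (Acoef n k : ℝ) * (-((n+1) * ((1+x)⁻¹)^(n+2) * ((Real.log (1+x))⁻¹)^k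
          + k * ((1+x)⁻¹)^(n+2) * ((Real.log (1+x))⁻¹)^(k+1)))) x :=
    HasDerivAt.fun_sum (fun k _ => (hasDerivAt_term n k hx).const_mul _)
  have h2 := h.const_mul ((-1:ℝ)^n)
  have hfun : (fun x => ((-1:ℝ))^n * ∑ k ∈ range (n+2),
        (Acoef n k : ℝ) * (((1+x)⁻¹)^(n+1) * ((Real.log (1+x))⁻¹)^k)) = Ffun n := rfl
  rw [hfun] at h2
  refine h2.congr_deriv (Eq.symm ?_)
  set u : ℝ := (1+x)⁻¹ with hu
  set v : ℝ := (Real.log (1+x))⁻¹ with hv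
  have key : ∑ k ∈ range (n+3), (Acoef (n+1) k : ℝ) * (u^(n+2) * v^k)
      = ∑ k ∈ range (n+2), (Acoef n k : ℝ)
          * ((n+1) * u^(n+2) * v^k + (k:ℝ) * u^(n+2) * v^(k+1)) := by
    calc ∑ k ∈ range (n+3), (Acoef (n+1) k:ℝ) * (u^(n+2) * v^k)
        = u^(n+2) * ∑ k ∈ range (n+3), (Acoef (n+1) k:ℝ) * v^k := by
          rw [Finset.mul_sum]; exact Finset.sum_congr rfl fun k _ => by ring
      _ = u^(n+2) * ∑ k ∈ range (n+2), (Acoef n k:ℝ) * ((n+1) * v^k + k * v^(k+1)) := by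
          rw [sum_id]
      _ = _ := by rw [Finset.mul_sum]; exact Finset.sum_congr rfl fun k _ => by ring
  show ((-1:ℝ))^(n+1) * ∑ k ∈ range (n+3), (Acoef (n+1) k : ℝ) * (u^(n+2) * v^k) = _
  rw [key, pow_succ]
  rw [Finset.mul_sum, Finset.mul_sum]
  exact Finset.sum_congr rfl fun k _ => by ring

lemma iter_eq (n : ℕ) : ∀ x ∈ Set.Ioi (0:ℝ),
    iteratedDeriv n (fun x : ℝ => 1 / ((1 + x) * Real.log (1 + x))) x = Ffun n x := by
  induction n with
  | zero =>
    intro x hx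
    rw [iteratedDeriv_zero]
    simp [Ffun, Finset.sum_range_succ, Acoef, one_div, mul_inv, mul_comm]
  | succ n ih =>
    intro x hx
    rw [iteratedDeriv_succ]
    have hEq : (iteratedDeriv n (fun x : ℝ => 1 / ((1 + x) * Real.log (1 + x))))
        =ᶠ[nhds x] Ffun n :=
      Filter.eventuallyEq_of_mem (isOpen_Ioi.mem_nhds hx) ih
    rw [hEq.deriv_eq, (hasDerivAt_F n hx).deriv]

/-- The function `x ↦ 1/((1+x)·ln(1+x))` is completely monotonic on `(0,∞)`:
it has derivatives of all orders there and `(-1)ⁿ` times its `n`-th derivative is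
nonnegative on `(0,∞)` for every `n ≥ 0`. -/
theorem stmt_11 :
    ContDiffOn ℝ (⊤ : ℕ∞) (fun x : ℝ => 1 / ((1 + x) * Real.log (1 + x))) (Set.Ioi 0) ∧
    ∀ n : ℕ, ∀ x : ℝ, 0 < x →
      0 ≤ (-1 : ℝ) ^ n *
        iteratedDeriv n (fun x : ℝ => 1 / ((1 + x) * Real.log (1 + x))) x := by
  constructor
  · intro x hx
    have hx : (0:ℝ) < x := hx
    have hy : (0:ℝ) < 1 + x := by linarith
    have hy' : (1:ℝ) + x ≠ 0 := ne_of_gt hy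
    have hL0 : 0 < Real.log (1+x) := Real.log_pos (by linarith)
    apply ContDiffAt.contDiffWithinAt
    have h1 : ContDiffAt ℝ (⊤ : ℕ∞) (fun x : ℝ => (1 + x) * Real.log (1 + x)) x := by
      apply ContDiffAt.mul
      · exact contDiffAt_const.add contDiffAt_id
      · exact (Real.contDiffAt_log.mpr hy').comp x (contDiffAt_const.add contDiffAt_id)
    exact contDiffAt_const.div h1 (by positivity)
  · intro n x hx
    rw [iter_eq n x hx, Ffun, ← mul_assoc, ← pow_add]
    have : (-1:ℝ)^(n+n) = 1 := by
      rw [← two_mul, pow_mul]; norm_num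
    rw [this, one_mul]
    apply Finset.sum_nonneg
    intro k _
    have hy : (0:ℝ) < 1 + x := by linarith
    have hL0 : 0 < Real.log (1+x) := Real.log_pos (by linarith)
    have h1 : (0:ℝ) ≤ (1+x)⁻¹ := by positivity
    have h2 : (0:ℝ) ≤ (Real.log (1+x))⁻¹ := by positivity
    positivity
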